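/- Correctness of perturbed multiplication of a continuous variable by a binary variable: Let n ≥ 1, let x ∈ [−2, 2], and let y₁^+, …, y_n^+, y₁^−, …, y_n^− ∈ {0, 1} be bits such that either y_i^− = 0 for all i or y_i^+ = 0 for all i, encoding the value y := Σ_{i=1}^n y_i^+/2^i − Σ_{i=1}^n y_i^−/2^i. Let π₁^+, …, π_n^+, π₁^−, …, π_n^− ∈ (−1, 1) be perturbations and define CTB := Σ_{i=1}^n (1/2^i)·BM(x, y_i^+; π_i^+) − Σ_{i=1}^n (1/2^i)·BM(x, y_i^−; π_i^−), where BM(x, b; π) = 4·(1−b) + max(−4, x − 8·(1−b) + π). Then CTB = x·y + σ for some σ ∈ ℝ with |σ| ≤ max over all the perturbations of their absolute values. -/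

import Mathlib

/-!
On a bit `b` the gadget is exact up to the perturbation: since `|x + π| ≤ 4`, the `max` is `-4`
when `b = 0` and `x + π` when `b = 1`, so `BM(x, b; π) = b (x + π)`. Hence `CTB = x y + σ` with
`σ = Σ y⁺ᵢ π⁺ᵢ / 2^i - Σ y⁻ᵢ π⁻ᵢ / 2^i`. One of the two sums vanishes by the sign condition, and
the other is bounded by `M Σ 1 / 2^i ≤ M`.
-/

/-- The perturbed bit-multiplication gadget: `BM(x, b; π) = 4(1−b) + max(−4, x − 8(1−b) + π)`. -/
noncomputable def BM (x b π : ℝ) : ℝ := 4 * (1 - b) + max (-4) (x - 8 * (1 - b) + π)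

/-- The perturbed continuous-times-binary circuit. -/
noncomputable def CTB (n : ℕ) (x : ℝ) (yp ym πp πm : ℕ → ℝ) : ℝ :=
  (∑ i ∈ Finset.Icc 1 n, (1 / 2 ^ i : ℝ) * BM x (yp i) (πp i))
    - ∑ i ∈ Finset.Icc 1 n, (1 / 2 ^ i : ℝ) * BM x (ym i) (πm i)

open Finset

lemma BM_of_bit {x b π : ℝ} (hb : b = 0 ∨ b = 1) (h : |x + π| ≤ 4) :
    BM x b π = b * (x + π) := by
  rw [abs_le] at h
  rcases hb with rfl | rfl <;> unfold BM
  · rw [max_eq_left (by linarith)]; ring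
  · rw [max_eq_right (by linarith)]; ring

lemma sum_BM_of_bits {s : Finset ℕ} {x : ℝ} {y π : ℕ → ℝ} (hy : ∀ i ∈ s, y i = 0 ∨ y i = 1)
    (h : ∀ i ∈ s, |x + π i| ≤ 4) :
    ∑ i ∈ s, (1 / 2 ^ i : ℝ) * BM x (y i) (π i)
      = x * ∑ i ∈ s, y i / 2 ^ i + ∑ i ∈ s, y i * π i / 2 ^ i := by
  rw [mul_sum, ← sum_add_distrib]
  refine sum_congr rfl fun i hi => ?_
  rw [BM_of_bit (hy i hi) (h i hi)]
  ring

lemma sum_Icc_one_div_two_pow_le_one (n : ℕ) : ∑ i ∈ Icc 1 n, (1 / 2 ^ i : ℝ) ≤ 1 := by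
  have h := geom_sum_Ico_le_of_lt_one (m := 1) (n := n + 1) (x := (1 / 2 : ℝ))
    (by norm_num) (by norm_num)
  rw [Ico_add_one_right_eq_Icc] at h
  norm_num at h
  simpa using h

lemma abs_sum_Icc_div_two_pow_le {n : ℕ} {c : ℕ → ℝ} {M : ℝ} (hM : 0 ≤ M)
    (hc : ∀ i ∈ Icc 1 n, |c i| ≤ M) : |∑ i ∈ Icc 1 n, c i / 2 ^ i| ≤ M :=
  calc |∑ i ∈ Icc 1 n, c i / 2 ^ i|
      ≤ ∑ i ∈ Icc 1 n, |c i / 2 ^ i| := abs_sum_le_sum_abs _ _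
    _ ≤ ∑ i ∈ Icc 1 n, M * (1 / 2 ^ i) := sum_le_sum fun i hi => by
        rw [abs_div, abs_of_pos (by positivity : (0 : ℝ) < 2 ^ i), mul_one_div]
        exact div_le_div_of_nonneg_right (hc i hi) (by positivity)
    _ = M * ∑ i ∈ Icc 1 n, (1 / 2 ^ i : ℝ) := (mul_sum _ _ _).symm
    _ ≤ M * 1 := mul_le_mul_of_nonneg_left (sum_Icc_one_div_two_pow_le_one n) hM
    _ = M := mul_one M

lemma abs_sum_Icc_bit_mul_div_two_pow_le {n : ℕ} {y π : ℕ → ℝ} {M : ℝ} (hM : 0 ≤ M)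
    (hy : ∀ i ∈ Icc 1 n, y i = 0 ∨ y i = 1) (hπ : ∀ i ∈ Icc 1 n, |π i| ≤ M) :
    |∑ i ∈ Icc 1 n, y i * π i / 2 ^ i| ≤ M :=
  abs_sum_Icc_div_two_pow_le hM fun i hi => by
    rcases hy i hi with h | h <;> simp [h, hM, hπ i hi]

/-- Correctness of perturbed multiplication of a continuous variable by a binary variable. -/
theorem contTimesBin_correct (n : ℕ) (hn : 1 ≤ n)
    (x : ℝ) (hx : x ∈ Set.Icc (-2 : ℝ) 2)
    (yp ym : ℕ → ℝ)
    (hbits : ∀ i, 1 ≤ i → i ≤ n → (yp i = 0 ∨ yp i = 1) ∧ (ym i = 0 ∨ ym i = 1))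
    (hsign : (∀ i, 1 ≤ i → i ≤ n → ym i = 0) ∨ (∀ i, 1 ≤ i → i ≤ n → yp i = 0))
    (πp πm : ℕ → ℝ)
    (hπ : ∀ i, 1 ≤ i → i ≤ n → πp i ∈ Set.Ioo (-1 : ℝ) 1 ∧ πm i ∈ Set.Ioo (-1 : ℝ) 1)
    (M : ℝ) (hM : ∀ i, 1 ≤ i → i ≤ n → |πp i| ≤ M ∧ |πm i| ≤ M) :
    ∃ σ : ℝ,
      CTB n x yp ym πp πm
        = x * ((∑ i ∈ Finset.Icc 1 n, yp i / 2 ^ i) - ∑ i ∈ Finset.Icc 1 n, ym i / 2 ^ i) + σ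
      ∧ |σ| ≤ M := by
  have hxπ : ∀ π ∈ Set.Ioo (-1 : ℝ) 1, |x + π| ≤ 4 := fun π hπ' =>
    abs_le.2 ⟨by linarith [hx.1, hπ'.1], by linarith [hx.2, hπ'.2]⟩
  have hM0 : 0 ≤ M := (abs_nonneg _).trans (hM 1 le_rfl hn).1
  simp only [← and_imp, ← mem_Icc] at hbits hsign hπ hM
  refine ⟨∑ i ∈ Icc 1 n, yp i * πp i / 2 ^ i - ∑ i ∈ Icc 1 n, ym i * πm i / 2 ^ i, ?_, ?_⟩
  · rw [CTB, sum_BM_of_bits (fun i hi => (hbits i hi).1) (fun i hi => hxπ _ (hπ i hi).1),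
      sum_BM_of_bits (fun i hi => (hbits i hi).2) (fun i hi => hxπ _ (hπ i hi).2)]
    ring
  · rcases hsign with hym | hyp
    · rw [sum_eq_zero (fun i hi => by simp [hym i hi] : ∀ i ∈ Icc 1 n, ym i * πm i / 2 ^ i = 0),
        sub_zero]
      exact abs_sum_Icc_bit_mul_div_two_pow_le hM0 (fun i hi => (hbits i hi).1)
        fun i hi => (hM i hi).1
    · rw [sum_eq_zero (fun i hi => by simp [hyp i hi] : ∀ i ∈ Icc 1 n, yp i * πp i / 2 ^ i = 0),
        zero_sub, abs_neg]
      exact abs_sum_Icc_bit_mul_div_two_pow_le hM0 (fun i hi => (hbits i hi).2)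
        fun i hi => (hM i hi).2
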